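/- arXiv:1301.7347 — 2 statements merged into one kernel-verified Lean document; each statement's English description precedes it below -/
import Mathlib

section
/- For all continuous functions a, b : 𝕋^d → ℂ, all ν, ν'' ∈ 𝔍(F) and all x ∈ 𝕋^d, the matrix Ω satisfies Σ_{ν' ∈ 𝔍(F)} Ω(a)_{ν,ν'}(x) · Ω(b)_{ν',ν''}(x) = Ω(ab)_{ν,ν''}(x); moreover Ω(ā)_{ν,ν'}(x) equals the complex conjugate of Ω(a)_{ν',ν}(x), and Ω(1)_{ν,ν'}(x) = δ_{ν,ν'} (Kronecker delta). In other words, a ↦ Ω(a) is a unital *-homomorphism from C(𝕋^d) into 𝔍(F)×𝔍(F) matrices over C(𝕋^d). -/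
open scoped BigOperators

/-- The endomorphism `σ_F` of the `d`-torus associated with the diagonal matrix
`F = diag(a_1, …, a_d)`: it raises the `j`-th coordinate to the power `a j`. -/
noncomputable def sigmaF {d : ℕ} (a : Fin d → ℕ) (y : Fin d → Circle) : Fin d → Circle :=
  fun j => y j ^ (a j)

/-- The endomorphism `σ_G` of the `d`-torus associated with an integer matrix `G`:
`σ_G(y)_j = ∏_k y_k ^ (G j k)`. -/
noncomputable def sigmaG {d : ℕ} (G : Matrix (Fin d) (Fin d) ℤ) (y : Fin d → Circle) :
    Fin d → Circle :=
  fun j => ∏ k, y k ^ (G j k)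

/-- The matrix `Ω(f)` indexed by `𝔍(F) = Π j, Fin (a j)`:
`Ω(f)_{ν,ν'}(x) = (1/N) ∑_{y : σ_F(y) = σ_G(x)} y^{ν'-ν} f(y)`, where `N = ∏ j, a j`. -/
noncomputable def OmegaMat {d : ℕ} (a : Fin d → ℕ) (G : Matrix (Fin d) (Fin d) ℤ)
    (f : (Fin d → Circle) → ℂ) (ν ν' : ∀ j, Fin (a j)) (x : Fin d → Circle) : ℂ :=
  (((∏ j, a j : ℕ)) : ℂ)⁻¹ *
    ∑ᶠ y ∈ {y : Fin d → Circle | sigmaF a y = sigmaG G x},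
      (∏ j, (y j : ℂ) ^ ((ν' j : ℤ) - (ν j : ℤ))) * f y

/-!
The fiber of `σ_F` over `c = (r_j ^ a_j)_j` is parametrised bijectively by `𝔍(F)` through
`p(μ) = (r_j ζ_j ^ μ_j)_j`, with `ζ_j` a primitive `a_j`-th root of unity. For the matrix
`V_{μ,ν} = p(μ)^ν` this gives `Ω(f) = N⁻¹ Vᴴ diag(f ∘ p) V`, and orthogonality of the characters
of `ℤ/a_1 × ⋯ × ℤ/a_d` gives `Vᴴ V = N • 1`; since `V` is square also `V Vᴴ = N • 1`. So
`f ↦ Ω(f)` is conjugation of the diagonal representation by the unitary `N^{-1/2} V`.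
-/

open scoped Matrix

namespace Matrix

variable {R ι : Type*} [Field R] [StarRing R] [Fintype ι] [DecidableEq ι]

noncomputable def conjDiagonal (V : Matrix ι ι R) (c : R) (f : ι → R) : Matrix ι ι R :=
  c⁻¹ • (Vᴴ * diagonal f * V)

variable {V : Matrix ι ι R} {c : R}

theorem mul_conjTranspose_eq_smul_one (hc : c ≠ 0) (hV : Vᴴ * V = c • 1) :
    V * Vᴴ = c • 1 := by
  have hinv : (c⁻¹ • Vᴴ) * V = 1 := by
    rw [smul_mul_assoc, hV, smul_smul, inv_mul_cancel₀ hc, one_smul]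
  rw [← mul_eq_one_comm.1 hinv, mul_smul_comm, smul_smul, mul_inv_cancel₀ hc, one_smul]

theorem conjDiagonal_mul (hc : c ≠ 0) (hV : Vᴴ * V = c • 1) (f g : ι → R) :
    V.conjDiagonal c f * V.conjDiagonal c g = V.conjDiagonal c (f * g) := by
  have hVV := mul_conjTranspose_eq_smul_one hc hV
  calc V.conjDiagonal c f * V.conjDiagonal c g
      = c⁻¹ • c⁻¹ • (Vᴴ * diagonal f * (V * Vᴴ) * diagonal g * V) := by
        simp only [conjDiagonal, smul_mul_smul_comm, mul_smul, Matrix.mul_assoc]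
    _ = V.conjDiagonal c (f * g) := by
        rw [hVV, Matrix.mul_smul, Matrix.smul_mul, Matrix.smul_mul, Matrix.mul_one, smul_smul c⁻¹ c,
          inv_mul_cancel₀ hc, one_smul, Matrix.mul_assoc _ (diagonal f), diagonal_mul_diagonal]
        rfl

theorem conjTranspose_conjDiagonal (hc : star c = c) (f : ι → R) :
    (V.conjDiagonal c f)ᴴ = V.conjDiagonal c (star f) := by
  simp only [conjDiagonal, conjTranspose_smul, conjTranspose_mul, conjTranspose_conjTranspose,
    diagonal_conjTranspose, star_inv₀, hc, Matrix.mul_assoc]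

theorem conjDiagonal_one (hc : c ≠ 0) (hV : Vᴴ * V = c • 1) : V.conjDiagonal c 1 = 1 := by
  rw [conjDiagonal, Pi.one_def, diagonal_one, Matrix.mul_one, hV, smul_smul, inv_mul_cancel₀ hc,
    one_smul]

theorem conjDiagonal_apply (f : ι → R) (i k : ι) :
    V.conjDiagonal c f i k = c⁻¹ * ∑ j, star (V j i) * V j k * f j := by
  rw [conjDiagonal, smul_apply, smul_eq_mul, mul_apply]
  simp only [mul_diagonal, conjTranspose_apply]
  congr 1
  exact Finset.sum_congr rfl fun j _ => by ring

end Matrix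

theorem IsPrimitiveRoot.sum_mul_pow_zpow_sub {K : Type*} [Field K] {ζ r : K} {n : ℕ}
    (hζ : IsPrimitiveRoot ζ n) (u v : Fin n) :
    ∑ m : Fin n, (r * ζ ^ (m : ℕ)) ^ ((v : ℤ) - u) = if u = v then (n : K) else 0 := by
  have hζ0 : ζ ≠ 0 := hζ.ne_zero u.pos.ne'
  set w := ζ ^ (v : ℕ) / ζ ^ (u : ℕ)
  have hterm (m : ℕ) : (r * ζ ^ m) ^ ((v : ℤ) - u) = r ^ ((v : ℤ) - u) * w ^ m := by
    rw [mul_zpow, ← zpow_natCast ζ m, ← zpow_mul, mul_comm (m : ℤ), zpow_mul, zpow_sub₀ hζ0,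
      zpow_natCast, zpow_natCast, zpow_natCast]
  split_ifs with huv
  · simp [huv]
  · have hw : w ≠ 1 := fun h => huv <| Fin.ext <|
      hζ.pow_inj u.isLt v.isLt ((div_eq_one_iff_eq (pow_ne_zero _ hζ0)).1 h).symm
    have hwn : w ^ n = 1 := by
      rw [div_pow, ← pow_mul, ← pow_mul, mul_comm, pow_mul, hζ.pow_eq_one, mul_comm (u : ℕ),
        pow_mul, hζ.pow_eq_one, one_pow, one_pow, div_one]
    rw [Finset.sum_congr rfl fun (m : Fin n) _ => hterm m, ← Finset.mul_sum,
      Fin.sum_univ_eq_sum_range (w ^ ·), geom_sum_eq hw, hwn, sub_self, zero_div, mul_zero]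

theorem Circle.exists_pow_eq (c : Circle) {n : ℕ} (hn : n ≠ 0) : ∃ r : Circle, r ^ n = c := by
  obtain ⟨t, rfl⟩ := Circle.exp_surjective c
  exact ⟨Circle.exp (t / n), by
    rw [← Circle.exp_natCast_mul, mul_div_cancel₀ t (Nat.cast_ne_zero.2 hn)]⟩

theorem Circle.isPrimitiveRoot_coe {ζ : Circle} {n : ℕ} (hζ : IsPrimitiveRoot ζ n) :
    IsPrimitiveRoot (ζ : ℂ) n :=
  hζ.map_of_injective (f := Circle.coeHom) Circle.coe_injective

theorem Circle.exists_mul_pow_eq_of_pow_eq {n : ℕ} [NeZero n] {ζ r y : Circle}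
    (hζ : IsPrimitiveRoot ζ n) (hy : y ^ n = r ^ n) : ∃ m : Fin n, r * ζ ^ (m : ℕ) = y := by
  obtain ⟨m, hm, hζm⟩ := (Circle.isPrimitiveRoot_coe hζ).eq_pow_of_pow_eq_one
    (ξ := ((y / r : Circle) : ℂ)) (by rw [← Circle.coe_pow, div_pow, hy, div_self', Circle.coe_one])
  refine ⟨⟨m, hm⟩, Circle.ext ?_⟩
  rw [Circle.coe_mul, Circle.coe_pow, hζm, Circle.coe_div, mul_div_cancel₀ _ r.coe_ne_zero]

theorem Circle.star_coe_pow_mul_coe_pow (z : Circle) (m k : ℕ) :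
    star ((z : ℂ) ^ m) * (z : ℂ) ^ k = (z : ℂ) ^ ((k : ℤ) - m) := by
  rw [star_pow, Complex.star_def, ← Circle.coe_inv_eq_conj, Circle.coe_inv,
    zpow_sub₀ z.coe_ne_zero, zpow_natCast, zpow_natCast, inv_pow, div_eq_mul_inv, mul_comm]

section Fiber

variable {d : ℕ} {a : Fin d → ℕ} {r ζ : Fin d → Circle}

noncomputable def fiberPoint (a : Fin d → ℕ) (r ζ : Fin d → Circle) (μ : ∀ j, Fin (a j)) :
    Fin d → Circle :=
  fun j => r j * ζ j ^ (μ j : ℕ)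

theorem fiberPoint_injective (hζ : ∀ j, IsPrimitiveRoot (ζ j) (a j)) :
    Function.Injective (fiberPoint a r ζ) := fun μ μ' h => funext fun j =>
  Fin.ext <| (hζ j).pow_inj (μ j).isLt (μ' j).isLt (mul_left_cancel (congrFun h j))

theorem range_fiberPoint (ha : ∀ j, a j ≠ 0) (hζ : ∀ j, IsPrimitiveRoot (ζ j) (a j))
    {c : Fin d → Circle} (hr : ∀ j, r j ^ a j = c j) :
    Set.range (fiberPoint a r ζ) = {y | sigmaF a y = c} := by
  ext y
  simp only [Set.mem_range, Set.mem_ofPred_eq, sigmaF, funext_iff, fiberPoint]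
  constructor
  · rintro ⟨μ, hμ⟩ j
    rw [← hμ j, mul_pow, ← pow_mul, mul_comm (μ j : ℕ), pow_mul, (hζ j).pow_eq_one, one_pow,
      mul_one, hr]
  · intro hy
    have hμ (j : Fin d) : ∃ m : Fin (a j), r j * ζ j ^ (m : ℕ) = y j :=
      haveI := NeZero.mk (ha j)
      Circle.exists_mul_pow_eq_of_pow_eq (hζ j) ((hy j).trans (hr j).symm)
    choose μ hμ using hμ
    exact ⟨μ, hμ⟩

theorem sum_prod_fiberPoint_zpow (hζ : ∀ j, IsPrimitiveRoot (ζ j) (a j))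
    (ν ν' : ∀ j, Fin (a j)) :
    ∑ μ, ∏ j, (fiberPoint a r ζ μ j : ℂ) ^ ((ν' j : ℤ) - ν j)
      = if ν = ν' then ((∏ j, a j : ℕ) : ℂ) else 0 := by
  simp only [fiberPoint, Circle.coe_mul, Circle.coe_pow]
  rw [← Fintype.prod_sum fun j (m : Fin (a j)) =>
    ((r j : ℂ) * (ζ j : ℂ) ^ (m : ℕ)) ^ ((ν' j : ℤ) - ν j)]
  simp only [(Circle.isPrimitiveRoot_coe (hζ _)).sum_mul_pow_zpow_sub,
    Fintype.prod_ite_zero, funext_iff, Nat.cast_prod]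
  congr

noncomputable def fiberCharMatrix (a : Fin d → ℕ) (r ζ : Fin d → Circle) :
    Matrix (∀ j, Fin (a j)) (∀ j, Fin (a j)) ℂ :=
  fun μ ν => ∏ j, (fiberPoint a r ζ μ j : ℂ) ^ (ν j : ℕ)

theorem star_fiberCharMatrix_mul (μ ν ν' : ∀ j, Fin (a j)) :
    star (fiberCharMatrix a r ζ μ ν) * fiberCharMatrix a r ζ μ ν'
      = ∏ j, (fiberPoint a r ζ μ j : ℂ) ^ ((ν' j : ℤ) - ν j) := by
  simp only [fiberCharMatrix, star_prod, ← Finset.prod_mul_distrib,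
    Circle.star_coe_pow_mul_coe_pow]

theorem conjTranspose_fiberCharMatrix_mul_self (hζ : ∀ j, IsPrimitiveRoot (ζ j) (a j)) :
    (fiberCharMatrix a r ζ)ᴴ * fiberCharMatrix a r ζ = ((∏ j, a j : ℕ) : ℂ) • 1 := by
  ext ν ν'
  rw [Matrix.mul_apply, Matrix.smul_apply, Matrix.one_apply, smul_eq_mul, mul_ite, mul_one,
    mul_zero, ← sum_prod_fiberPoint_zpow hζ]
  exact Finset.sum_congr rfl fun μ _ => star_fiberCharMatrix_mul μ ν ν'

theorem OmegaMat_eq_conjDiagonal (ha : ∀ j, a j ≠ 0) (hζ : ∀ j, IsPrimitiveRoot (ζ j) (a j))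
    {G : Matrix (Fin d) (Fin d) ℤ} {x : Fin d → Circle} (hr : ∀ j, r j ^ a j = sigmaG G x j)
    (f : (Fin d → Circle) → ℂ) (ν ν' : ∀ j, Fin (a j)) :
    OmegaMat a G f ν ν' x
      = (fiberCharMatrix a r ζ).conjDiagonal (∏ j, a j : ℕ) (f ∘ fiberPoint a r ζ) ν ν' := by
  rw [OmegaMat, ← range_fiberPoint ha hζ hr, finsum_mem_range (fiberPoint_injective hζ),
    finsum_eq_sum_of_fintype, Matrix.conjDiagonal_apply]
  simp only [star_fiberCharMatrix_mul, Function.comp_apply]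

end Fiber

theorem omega_unital_star_hom_general {d : ℕ} (a : Fin d → ℕ) (G : Matrix (Fin d) (Fin d) ℤ)
    (f g : (Fin d → Circle) → ℂ) (ν ν'' : ∀ j, Fin (a j)) (x : Fin d → Circle) :
    (∑ ν' : ∀ j, Fin (a j), OmegaMat a G f ν ν' x * OmegaMat a G g ν' ν'' x
        = OmegaMat a G (fun y => f y * g y) ν ν'' x) ∧
    (∀ ν' : ∀ j, Fin (a j), OmegaMat a G (fun y => starRingEnd ℂ (f y)) ν ν' x
        = starRingEnd ℂ (OmegaMat a G f ν' ν x)) ∧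
    (∀ ν' : ∀ j, Fin (a j), OmegaMat a G (fun _ => (1 : ℂ)) ν ν' x
        = if ν = ν' then 1 else 0) := by
  have ha (j : Fin d) : a j ≠ 0 := (ν j).pos.ne'
  choose r hr using fun j => (sigmaG G x j).exists_pow_eq (ha j)
  choose ζ hζ using fun j =>
    haveI := NeZero.mk (ha j)
    HasEnoughRootsOfUnity.exists_primitiveRoot Circle (a j)
  have hV := conjTranspose_fiberCharMatrix_mul_self (r := r) hζ
  have hN : ((∏ j, a j : ℕ) : ℂ) ≠ 0 :=
    Nat.cast_ne_zero.2 (Finset.prod_ne_zero_iff.2 fun j _ => ha j)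
  simp only [OmegaMat_eq_conjDiagonal ha hζ hr]
  refine ⟨?_, fun ν' => ?_, fun ν' => ?_⟩
  · rw [← Matrix.mul_apply, Matrix.conjDiagonal_mul hN hV]
    rfl
  · exact (congrFun₂ (Matrix.conjTranspose_conjDiagonal (Complex.conj_natCast _) _) ν ν').symm
  · exact (congrFun₂ (Matrix.conjDiagonal_one hN hV) ν ν').trans (Matrix.one_apply ..)

/-- `a ↦ Ω(a)` is a unital `*`-homomorphism from `C(𝕋^d)` into `𝔍(F) × 𝔍(F)` matrices
over `C(𝕋^d)`: it is multiplicative, `*`-preserving and unital, entrywise and pointwise. -/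
theorem omega_unital_star_hom {d : ℕ} (hd : 1 ≤ d) (a : Fin d → ℕ) (ha : ∀ j, 0 < a j)
    (G : Matrix (Fin d) (Fin d) ℤ) (hG : G.det ≠ 0)
    (f g : (Fin d → Circle) → ℂ) (hf : Continuous f) (hg : Continuous g)
    (ν ν'' : ∀ j, Fin (a j)) (x : Fin d → Circle) :
    (∑ ν' : ∀ j, Fin (a j), OmegaMat a G f ν ν' x * OmegaMat a G g ν' ν'' x
        = OmegaMat a G (fun y => f y * g y) ν ν'' x) ∧
    (∀ ν' : ∀ j, Fin (a j), OmegaMat a G (fun y => starRingEnd ℂ (f y)) ν ν' x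
        = starRingEnd ℂ (OmegaMat a G f ν' ν x)) ∧
    (∀ ν' : ∀ j, Fin (a j), OmegaMat a G (fun _ => (1 : ℂ)) ν ν' x
        = if ν = ν' then 1 else 0) :=
  omega_unital_star_hom_general a G f g ν ν'' x
end

section
/- Suppose G ∈ M_d(ℤ) is an integer dilation matrix, i.e., every root λ ∈ ℂ of the characteristic polynomial of G satisfies |λ| > 1. Then for each 1 ≤ k ≤ d, the 𝔍_k×𝔍_k integer matrix B_k with (I,J) entry det G_{J,I} satisfies det(1 − B_k) ≠ 0; that is, 1 is not an eigenvalue of B_k. -/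
/-!
The matrix `B_k` is the transpose of the `k`-th compound matrix `C_k(G)`, the matrix of `⋀^k G`.
Since `C_k` is multiplicative, a vector fixed by `C_k(G)` is fixed by every `C_k(G⁻¹)^m = C_k(G⁻ᵐ)`.
The spectrum of `G⁻¹` lies in the open unit disc, so `G⁻ᵐ → 0` by Gelfand's formula, and
`C_k(G⁻ᵐ) → C_k(0) = 0` because `C_k` is continuous and `k ≥ 1`; hence the fixed vector is `0`.
-/

open scoped BigOperators

/-- For `I, J` `k`-element subsets of `Fin d` and `G ∈ M_d(ℤ)`, the minor `det G_{J,I}`: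
the determinant of the `k × k` submatrix of `G` with rows indexed by `J` and columns by `I`,
each taken in increasing order. -/
def minorJI {d k : ℕ} (G : Matrix (Fin d) (Fin d) ℤ)
    (J I : {s : Finset (Fin d) // s.card = k}) : ℤ :=
  (G.submatrix (fun i : Fin k => ((J.1.orderIsoOfFin J.2 i : Fin d)))
    (fun i : Fin k => ((I.1.orderIsoOfFin I.2 i : Fin d)))).det

open Filter Topology Matrix Set.powersetCard

theorem tendsto_pow_atTop_nhds_zero_of_spectralRadius_lt_one {A : Type*} [NormedRing A]
    [NormedAlgebra ℂ A] [CompleteSpace A] {a : A} (ha : spectralRadius ℂ a < 1) :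
    Tendsto (a ^ ·) atTop (𝓝 0) := by
  obtain ⟨r, hρr, hr1⟩ := ENNReal.lt_iff_exists_nnreal_btwn.mp ha
  have hbound : ∀ᶠ m : ℕ in atTop, ‖a ^ m‖ ≤ r ^ m := by
    have hgelfand := spectrum.pow_nnnorm_pow_one_div_tendsto_nhds_spectralRadius a
    filter_upwards [hgelfand.eventually_lt_const hρr, eventually_gt_atTop 0] with m hm hm0
    rw [one_div, ENNReal.rpow_inv_lt_iff (by positivity), ENNReal.rpow_natCast] at hm
    exact_mod_cast hm.le
  exact squeeze_zero_norm' hbound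
    (tendsto_pow_atTop_nhds_zero_of_lt_one r.2 (by exact_mod_cast hr1))

theorem spectrum.norm_lt_one_of_mem_inv {𝕜 A : Type*} [NormedField 𝕜] [Ring A] [Algebra 𝕜 A]
    {a : Aˣ} (ha : ∀ z ∈ spectrum 𝕜 (a : A), 1 < ‖z‖) {z : 𝕜} (hz : z ∈ spectrum 𝕜 (↑a⁻¹ : A)) :
    ‖z‖ < 1 := by
  rw [← spectrum.map_inv, Set.mem_inv] at hz
  exact (by simpa [one_lt_inv_iff₀] using ha _ hz : _ ∧ _).2

namespace Matrix

theorem tendsto_pow_atTop_nhds_zero_of_forall_spectrum_norm_lt_one {n : Type*} [Fintype n]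
    [DecidableEq n] {H : Matrix n n ℂ} (hH : ∀ z ∈ spectrum ℂ H, ‖z‖ < 1) :
    Tendsto (H ^ ·) atTop (𝓝 0) := by
  rcases isEmpty_or_nonempty n with hn | hn
  · exact tendsto_const_nhds.congr fun _ => Subsingleton.elim _ _
  -- The `ℓ∞` operator norm is a Banach algebra norm inducing the entrywise topology.
  let := Matrix.linftyOpNormedRing (n := n) (α := ℂ)
  let := Matrix.linftyOpNormedAlgebra (n := n) (R := ℂ) (α := ℂ)
  refine tendsto_pow_atTop_nhds_zero_of_spectralRadius_lt_one ?_
  simpa using spectrum.spectralRadius_lt_of_forall_lt H (r := 1)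
    fun z hz => by simpa [← NNReal.coe_lt_coe] using hH z hz

section Compound

variable {R S : Type*} [CommRing R] [CommRing S] {n : Type*} [Fintype n] [LinearOrder n] (k : ℕ)

/-- The `k`-th compound matrix, taken as the matrix of `⋀^k A` in the basis `⋀_{i ∈ s} eᵢ`, so
that multiplicativity is the functoriality of `⋀^k`; its entries are the `k × k` minors of `A`. -/
noncomputable def compound :
    Matrix n n R →* Matrix (Set.powersetCard n k) (Set.powersetCard n k) R where
  toFun A := LinearMap.toMatrix ((Pi.basisFun R n).exteriorPower k)
    ((Pi.basisFun R n).exteriorPower k) (exteriorPower.map k (toLin' A))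
  map_one' := by rw [toLin'_one, exteriorPower.map_id, LinearMap.toMatrix_id]
  map_mul' A B := by
    rw [toLin'_mul, exteriorPower.map_comp,
      LinearMap.toMatrix_comp _ ((Pi.basisFun R n).exteriorPower k)]

theorem compound_apply (A : Matrix n n R) (s t : Set.powersetCard n k) :
    compound k A s t = (A.submatrix (ofFinEmbEquiv.symm s) (ofFinEmbEquiv.symm t)).det := by
  rw [← det_transpose]
  simp only [compound, MonoidHom.coe_mk, OneHom.coe_mk, LinearMap.toMatrix_apply,
    exteriorPower.coe_basis, exteriorPower.ιMulti_family, exteriorPower.map_apply_ιMulti,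
    exteriorPower.basis_repr_apply, exteriorPower.ιMultiDual_apply_ιMulti, Function.comp_apply,
    Pi.basisFun_apply, toLin'_apply, mulVec_single, MulOpposite.op_one, one_smul,
    Module.Basis.coord_apply, Pi.basisFun_repr, transpose_submatrix]
  rfl

theorem compound_map (f : R →+* S) (A : Matrix n n R) :
    compound k (A.map f) = (compound k A).map f := by
  ext s t
  rw [map_apply, compound_apply, compound_apply, submatrix_map, RingHom.map_det,
    RingHom.mapMatrix_apply]

theorem compound_zero (hk : k ≠ 0) : compound k (0 : Matrix n n R) = 0 := by
  have : NeZero k := ⟨hk⟩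
  ext s t
  simp [compound_apply]

theorem continuous_compound [TopologicalSpace R] [IsTopologicalRing R] :
    Continuous (compound k : Matrix n n R → Matrix (Set.powersetCard n k) _ R) := by
  refine continuous_matrix fun s t => ?_
  simp only [compound_apply]
  exact (continuous_id.matrix_submatrix _ _).matrix_det

theorem det_one_sub_compound_ne_zero {A : Matrix n n ℂ} (hA : ∀ z ∈ spectrum ℂ A, 1 < ‖z‖)
    (hk : k ≠ 0) : (1 - compound k A).det ≠ 0 := by
  obtain ⟨u, rfl⟩ : IsUnit A :=
    spectrum.isUnit_of_zero_notMem ℂ fun h => (hA 0 h).not_ge (by simp)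
  intro hdet
  obtain ⟨v, hv0, hv⟩ := exists_mulVec_eq_zero_iff.mpr hdet
  rw [sub_mulVec, one_mulVec, sub_eq_zero, eq_comm] at hv
  have hfix_inv : compound k (↑u⁻¹ : Matrix n n ℂ) *ᵥ v = v := by
    conv_lhs => rw [← hv, mulVec_mulVec, ← map_mul, Units.inv_mul, map_one, one_mulVec]
  have hfix_pow : ∀ m, compound k ((↑u⁻¹ : Matrix n n ℂ) ^ m) *ᵥ v = v := by
    intro m
    induction m with
    | zero => rw [pow_zero, map_one, one_mulVec]
    | succ m ih => rw [pow_succ, map_mul, ← mulVec_mulVec, hfix_inv, ih]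
  have hlim : Tendsto (fun m => compound k ((↑u⁻¹ : Matrix n n ℂ) ^ m) *ᵥ v) atTop
      (𝓝 (compound k 0 *ᵥ v)) :=
    (((continuous_compound k).matrix_mulVec continuous_const).tendsto 0).comp
      (tendsto_pow_atTop_nhds_zero_of_forall_spectrum_norm_lt_one
        fun _ => spectrum.norm_lt_one_of_mem_inv hA)
  simp only [hfix_pow, compound_zero k hk, zero_mulVec] at hlim
  exact hv0 (tendsto_nhds_unique tendsto_const_nhds hlim)

end Compound

end Matrix

theorem det_one_sub_compound_ne_zero_of_dilation_general {d : ℕ}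
    (G : Matrix (Fin d) (Fin d) ℤ)
    (hG : ∀ z : ℂ, (Matrix.charpoly (G.map (Int.cast : ℤ → ℂ))).IsRoot z → 1 < ‖z‖)
    (k : ℕ) (hk1 : 1 ≤ k) :
    ((1 : Matrix {s : Finset (Fin d) // s.card = k} {s : Finset (Fin d) // s.card = k} ℤ)
        - Matrix.of (fun I J : {s : Finset (Fin d) // s.card = k} => minorJI G J I)).det
      ≠ 0 := by
  let e : Set.powersetCard (Fin d) k ≃ {s : Finset (Fin d) // s.card = k} :=
    Equiv.subtypeEquivRight fun _ => mem_iff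
  have hB : Matrix.of (fun I J => minorJI G J I) = reindex e e (compound k G)ᵀ := by
    ext I J
    rw [reindex_apply, submatrix_apply, transpose_apply, compound_apply]
    rfl
  have hdet :
      ((1 : Matrix _ _ ℤ) - reindex e e (compound k G)ᵀ).det = (1 - compound k G).det := by
    rw [← det_reindex_self e.symm, ← det_transpose]
    congr 1
    ext s t
    simp [one_apply, eq_comm]
  have hGC : ∀ z ∈ spectrum ℂ (G.map (Int.cast : ℤ → ℂ)), 1 < ‖z‖ :=
    fun z hz => hG z (mem_spectrum_iff_isRoot_charpoly.mp hz)
  rw [hB, hdet, ← (Int.castRingHom ℂ).injective_int.ne_iff' (map_zero _), RingHom.map_det,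
    map_sub, map_one, RingHom.mapMatrix_apply, ← compound_map]
  exact det_one_sub_compound_ne_zero k hGC (by omega)

/-- If `G ∈ M_d(ℤ)` is an integer dilation matrix, i.e. every complex eigenvalue `λ` of `G`
(root of its characteristic polynomial) satisfies `|λ| > 1`, then for each `1 ≤ k ≤ d` the
matrix `B_k = (det G_{J,I})_{I,J}` indexed by `k`-element subsets of `{1,…,d}` satisfies
`det(1 − B_k) ≠ 0`; that is, `1` is not an eigenvalue of `B_k`. -/
theorem det_one_sub_compound_ne_zero_of_dilation {d : ℕ} (hd : 1 ≤ d)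
    (G : Matrix (Fin d) (Fin d) ℤ)
    (hG : ∀ z : ℂ, (Matrix.charpoly (G.map (Int.cast : ℤ → ℂ))).IsRoot z → 1 < ‖z‖)
    (k : ℕ) (hk1 : 1 ≤ k) (hkd : k ≤ d) :
    ((1 : Matrix {s : Finset (Fin d) // s.card = k} {s : Finset (Fin d) // s.card = k} ℤ)
        - Matrix.of (fun I J : {s : Finset (Fin d) // s.card = k} => minorJI G J I)).det
      ≠ 0 :=
  det_one_sub_compound_ne_zero_of_dilation_general G hG k hk1
end
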